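/- Let t be a rooted tree with pairwise distinct leaf labels and S a set of labels. If a vertex u of t is complete with respect to S (counter_S(u) = |L(u)|), then every vertex v in the subtree rooted at u is complete with respect to S, i.e., counter_S(v) = |L(v)| for all descendants v of u. -/

import Mathlib

inductive RTree (α : Type*) where
  | leaf (a : α)
  | node (children : List (RTree α))

namespace RTree

variable {α : Type*} [DecidableEq α]

/-- The list of leaf labels of a tree. -/
def leafList : RTree α → List α
  | leaf a => [a]
  | node cs => (cs.attach.map fun ⟨w, _⟩ => leafList w).flatten
decreasing_by have := List.sizeOf_lt_of_mem ‹_›; simp only [node.sizeOf_spec]; omega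

/-- `L v` is the finite set of labels of leaves in the subtree rooted at `v`. -/
def L (v : RTree α) : Finset α := (leafList v).toFinset

/-- The counter function. -/
def counter (S : Finset α) : RTree α → ℕ
  | leaf a => if a ∈ S then 1 else 0
  | node cs =>
      (cs.attach.map fun ⟨w, _⟩ =>
        if counter S w = (L w).card then counter S w else 0).sum
decreasing_by have := List.sizeOf_lt_of_mem ‹_›; simp only [node.sizeOf_spec]; omega

/-- `IsVertex v t` means that `v` is a vertex (subtree) of `t`. -/
inductive IsVertex : RTree α → RTree α → Prop
  | refl (t : RTree α) : IsVertex t t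
  | child {v w : RTree α} {cs : List (RTree α)} : w ∈ cs → IsVertex v w → IsVertex v (node cs)

/-- The list of all vertices (subtrees) of a tree. -/
def vertexList : RTree α → List (RTree α)
  | leaf a => [leaf a]
  | node cs => node cs :: (cs.attach.map fun ⟨w, _⟩ => vertexList w).flatten
decreasing_by have := List.sizeOf_lt_of_mem ‹_›; simp only [node.sizeOf_spec]; omega

end RTree

/-! With distinct labels, `|L w|` is the number of leaves below `w`, and `counter_S w` never
exceeds that number. Hence at a complete node `counter_S` is a sum of child contributions, each
at most the child's leaf count, adding up to the total leaf count; so every child contributes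
fully, i.e. is complete. Induction down the tree finishes the proof. -/

namespace RTree

variable {α : Type*}

@[elab_as_elim, induction_eliminator]
theorem induction_on {motive : RTree α → Prop} (t : RTree α) (leaf : ∀ a, motive (leaf a))
    (node : ∀ cs, (∀ w ∈ cs, motive w) → motive (node cs)) : motive t :=
  t.rec (motive_2 := fun cs => ∀ w ∈ cs, motive w) leaf node
    (fun _ h => absurd h List.not_mem_nil) fun _ _ hw hcs => List.forall_mem_cons.2 ⟨hw, hcs⟩

theorem leafList_node (cs : List (RTree α)) : (node cs).leafList = cs.flatMap leafList := by
  rw [leafList, List.flatMap_def]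
  exact congrArg List.flatten List.attach_map_val

theorem nodup_leafList_of_mem {cs : List (RTree α)} (hnd : (node cs).leafList.Nodup)
    {w : RTree α} (hw : w ∈ cs) : w.leafList.Nodup := by
  rw [leafList_node, List.nodup_flatMap] at hnd
  exact hnd.1 w hw

theorem IsVertex.nodup_leafList {v t : RTree α} (hv : IsVertex v t) (hnd : t.leafList.Nodup) :
    v.leafList.Nodup := by
  induction hv with
  | refl => exact hnd
  | child hw _ ih => exact ih (nodup_leafList_of_mem hnd hw)

variable [DecidableEq α]

theorem card_L_of_nodup {v : RTree α} (hnd : v.leafList.Nodup) :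
    (L v).card = v.leafList.length :=
  List.toFinset_card_of_nodup hnd

theorem counter_node (S : Finset α) (cs : List (RTree α)) :
    counter S (node cs) =
      (cs.map fun w => if counter S w = (L w).card then counter S w else 0).sum := by
  rw [counter]
  exact congrArg List.sum
    (List.attach_map_val (f := fun w => if counter S w = (L w).card then counter S w else 0))

theorem counter_le_length_leafList (S : Finset α) (v : RTree α) :
    counter S v ≤ v.leafList.length := by
  induction v with
  | leaf a => rw [counter, leafList]; split <;> simp
  | node cs ih =>
    rw [counter_node, leafList_node, List.length_flatMap]
    refine List.sum_le_sum fun w hw => ?_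
    split
    · exact ih w hw
    · exact Nat.zero_le _

theorem counter_eq_card_L_of_mem (S : Finset α) {cs : List (RTree α)}
    (hnd : (node cs).leafList.Nodup) (hc : counter S (node cs) = (L (node cs)).card)
    {w : RTree α} (hw : w ∈ cs) : counter S w = (L w).card := by
  by_contra hne
  have hlt : counter S w < w.leafList.length :=
    (counter_le_length_leafList S w).lt_of_ne (card_L_of_nodup (nodup_leafList_of_mem hnd hw) ▸ hne)
  suffices counter S (node cs) < (L (node cs)).card from this.ne hc
  rw [counter_node, card_L_of_nodup hnd, leafList_node, List.length_flatMap]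
  refine List.sum_lt_sum _ _ (fun x _ => ?_) ⟨w, hw, ?_⟩
  · split
    · exact counter_le_length_leafList S x
    · exact Nat.zero_le _
  · rw [if_neg hne]
    exact Nat.zero_lt_of_lt hlt

theorem IsVertex.counter_eq_card_L {S : Finset α} {v u : RTree α} (hv : IsVertex v u)
    (hnd : u.leafList.Nodup) (hc : counter S u = (L u).card) : counter S v = (L v).card := by
  induction hv with
  | refl => exact hc
  | child hw _ ih => exact ih (nodup_leafList_of_mem hnd hw) (counter_eq_card_L_of_mem S hnd hc hw)

/-- if a vertex `u` is complete with respect to `S` then every vertex in the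
subtree rooted at `u` is complete with respect to `S`. -/
theorem complete_descendants (t : RTree α) (hnd : t.leafList.Nodup)
    (S : Finset α) (u : RTree α) (hu : IsVertex u t)
    (hc : counter S u = (L u).card) :
    ∀ v : RTree α, IsVertex v u → counter S v = (L v).card :=
  fun _ hv => hv.counter_eq_card_L (hu.nodup_leafList hnd) hc

end RTree
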